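/- arXiv:1609.00834 — 3 statements merged into one kernel-verified Lean document; each statement's English description precedes it below -/
import Mathlib

section
/- Let f₁ and f₂ be continuous functions on [0,1]² that are real analytic on the open square (0,1)², and let b₁, b₂ be continuous functions on [0,1]² satisfying bᵢ(s,t) = 0 whenever |s−t| ≥ δᵢ for some δ₁, δ₂ < 1. If f₁ + b₁ = f₂ + b₂ on [0,1]², then f₁ = f₂ and b₁ = b₂. -/
/-!
Far from the diagonal both banded kernels vanish, so `f₁ = f₂` on the nonempty open set
`{p ∈ (0,1)² | max δ₁ δ₂ < p.1 - p.2}` near the corner `(1, 0)`. By the identity theorem the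
analytic functions `f₁, f₂` then agree on the connected square `(0,1)²`, by continuity on its
closure `[0,1]²`, and finally `b₁ = b₂` there since `f₁ + b₁ = f₂ + b₂`.
-/

open Set

theorem AnalyticOnNhd.eqOn_closure_of_eqOn_isOpen {𝕜 E F : Type*} [NontriviallyNormedField 𝕜]
    [NormedAddCommGroup E] [NormedSpace 𝕜 E] [NormedAddCommGroup F] [NormedSpace 𝕜 F]
    {f g : E → F} {S U : Set E} (hfa : AnalyticOnNhd 𝕜 f S) (hga : AnalyticOnNhd 𝕜 g S)
    (hfc : ContinuousOn f (closure S)) (hgc : ContinuousOn g (closure S))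
    (hS : IsPreconnected S) (hU : IsOpen U) (hUne : U.Nonempty) (hUS : U ⊆ S)
    (hfg : EqOn f g U) : EqOn f g (closure S) := by
  obtain ⟨z₀, hz₀⟩ := hUne
  have hS_eq : EqOn f g S := hfa.eqOn_of_preconnected_of_eventuallyEq hga hS (hUS hz₀)
    (Filter.eventuallyEq_of_mem (hU.mem_nhds hz₀) hfg)
  exact hS_eq.of_subset_closure hfc hgc subset_closure subset_rfl

theorem closure_Ioo_prod_Ioo_zero_one :
    closure (Ioo (0:ℝ) 1 ×ˢ Ioo (0:ℝ) 1) = Icc (0:ℝ) 1 ×ˢ Icc (0:ℝ) 1 := by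
  rw [closure_prod_eq, closure_Ioo zero_ne_one]

theorem exists_mem_Ioo_prod_Ioo_zero_one_lt_sub {δ : ℝ} (hδ : δ < 1) :
    ∃ p ∈ Ioo (0:ℝ) 1 ×ˢ Ioo (0:ℝ) 1, δ < p.1 - p.2 := by
  set ε := min (1 / 4) ((1 - δ) / 4)
  have hε_pos : 0 < ε := lt_min (by norm_num) (by linarith)
  have hε_le : ε ≤ 1 / 4 := min_le_left _ _
  have hε_le' : ε ≤ (1 - δ) / 4 := min_le_right _ _
  exact ⟨(1 - ε, ε), ⟨⟨by linarith, by linarith⟩, ⟨hε_pos, by linarith⟩⟩,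
    show δ < 1 - ε - ε by linarith⟩

theorem uniqueness_analytic_plus_banded_general
    (f₁ f₂ b₁ b₂ : ℝ × ℝ → ℝ) (δ₁ δ₂ : ℝ) (hδ₁ : δ₁ < 1) (hδ₂ : δ₂ < 1)
    (hf₁c : ContinuousOn f₁ (Icc (0:ℝ) 1 ×ˢ Icc (0:ℝ) 1))
    (hf₂c : ContinuousOn f₂ (Icc (0:ℝ) 1 ×ˢ Icc (0:ℝ) 1))
    (hf₁a : AnalyticOnNhd ℝ f₁ (Ioo (0:ℝ) 1 ×ˢ Ioo (0:ℝ) 1))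
    (hf₂a : AnalyticOnNhd ℝ f₂ (Ioo (0:ℝ) 1 ×ˢ Ioo (0:ℝ) 1))
    (hb₁0 : ∀ p : ℝ × ℝ, δ₁ ≤ |p.1 - p.2| → b₁ p = 0)
    (hb₂0 : ∀ p : ℝ × ℝ, δ₂ ≤ |p.1 - p.2| → b₂ p = 0)
    (hsum : ∀ p ∈ Icc (0:ℝ) 1 ×ˢ Icc (0:ℝ) 1, f₁ p + b₁ p = f₂ p + b₂ p) :
    (∀ p ∈ Icc (0:ℝ) 1 ×ˢ Icc (0:ℝ) 1, f₁ p = f₂ p) ∧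
    (∀ p ∈ Icc (0:ℝ) 1 ×ˢ Icc (0:ℝ) 1, b₁ p = b₂ p) := by
  set S := Ioo (0:ℝ) 1 ×ˢ Ioo (0:ℝ) 1
  set U := S ∩ {p : ℝ × ℝ | max δ₁ δ₂ < p.1 - p.2}
  have hU_open : IsOpen U :=
    (isOpen_Ioo.prod isOpen_Ioo).inter (isOpen_lt continuous_const (by fun_prop))
  have hU_ne : U.Nonempty := exists_mem_Ioo_prod_Ioo_zero_one_lt_sub (max_lt hδ₁ hδ₂)
  have hS_sub : S ⊆ Icc (0:ℝ) 1 ×ˢ Icc (0:ℝ) 1 :=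
    prod_mono Ioo_subset_Icc_self Ioo_subset_Icc_self
  have hf_U : EqOn f₁ f₂ U := fun p ⟨hpS, hp⟩ => by
    have hδp : max δ₁ δ₂ ≤ |p.1 - p.2| := hp.out.le.trans (le_abs_self _)
    have := hsum p (hS_sub hpS)
    rw [hb₁0 p ((le_max_left _ _).trans hδp), hb₂0 p ((le_max_right _ _).trans hδp)] at this
    simpa using this
  rw [← closure_Ioo_prod_Ioo_zero_one] at hf₁c hf₂c hsum ⊢
  have hf : EqOn f₁ f₂ (closure S) :=
    hf₁a.eqOn_closure_of_eqOn_isOpen hf₂a hf₁c hf₂c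
      ((convex_Ioo _ _).prod (convex_Ioo _ _)).isPreconnected hU_open hU_ne inter_subset_left hf_U
  exact ⟨hf, fun p hp => by linarith [hsum p hp, hf hp]⟩

/-- If two kernels, each continuous on `[0,1]²` and real analytic on `(0,1)²`, differ by
banded (bandwidths `δ₁, δ₂ < 1`) continuous kernels, i.e. `f₁ + b₁ = f₂ + b₂`, then
`f₁ = f₂` and `b₁ = b₂` on `[0,1]²`. -/
theorem uniqueness_analytic_plus_banded
    (f₁ f₂ b₁ b₂ : ℝ × ℝ → ℝ) (δ₁ δ₂ : ℝ) (hδ₁ : δ₁ < 1) (hδ₂ : δ₂ < 1)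
    (hf₁c : ContinuousOn f₁ (Icc (0:ℝ) 1 ×ˢ Icc (0:ℝ) 1))
    (hf₂c : ContinuousOn f₂ (Icc (0:ℝ) 1 ×ˢ Icc (0:ℝ) 1))
    (hb₁c : ContinuousOn b₁ (Icc (0:ℝ) 1 ×ˢ Icc (0:ℝ) 1))
    (hb₂c : ContinuousOn b₂ (Icc (0:ℝ) 1 ×ˢ Icc (0:ℝ) 1))
    (hf₁a : AnalyticOnNhd ℝ f₁ (Ioo (0:ℝ) 1 ×ˢ Ioo (0:ℝ) 1))
    (hf₂a : AnalyticOnNhd ℝ f₂ (Ioo (0:ℝ) 1 ×ˢ Ioo (0:ℝ) 1))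
    (hb₁0 : ∀ p : ℝ × ℝ, δ₁ ≤ |p.1 - p.2| → b₁ p = 0)
    (hb₂0 : ∀ p : ℝ × ℝ, δ₂ ≤ |p.1 - p.2| → b₂ p = 0)
    (hsum : ∀ p ∈ Icc (0:ℝ) 1 ×ˢ Icc (0:ℝ) 1, f₁ p + b₁ p = f₂ p + b₂ p) :
    (∀ p ∈ Icc (0:ℝ) 1 ×ˢ Icc (0:ℝ) 1, f₁ p = f₂ p) ∧
    (∀ p ∈ Icc (0:ℝ) 1 ×ˢ Icc (0:ℝ) 1, b₁ p = b₂ p) :=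
  uniqueness_analytic_plus_banded_general f₁ f₂ b₁ b₂ δ₁ δ₂ hδ₁ hδ₂ hf₁c hf₂c hf₁a hf₂a hb₁0 hb₂0
    hsum
end

section
/- Let L ∈ ℝ^{K×K} be a symmetric matrix of rank r such that every r × r minor of L is nonzero, and let Ω = {(i,j) : |i−j| > m} for some integer m with K ≥ 2r + 2 + 2m. Then L is the unique matrix of rank at most r agreeing with L on Ω: if L' has rank ≤ r and L'(i,j) = L(i,j) for all (i,j) ∈ Ω, then L' = L. -/
/-!
A matrix of rank at most `r` has all its `(r + 1) × (r + 1)` minors equal to zero. Expanding such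
a minor along its first row shows that its corner entry is determined by the other entries as soon
as the complementary `r × r` minor is nonzero. So `L'` and `L` agree at `(s, t)` once they agree on
a border `{s} × g`, `f × {t}`, `f × g` with `det L[f, g] ≠ 0`.

The rows are recovered in increasing order. For row `s` and a band column `t`, take for `f` the
rows `< s` (already recovered) together with `r - s` rows beyond `s + 2m + r` (none once `s ≥ r`),
and for `g` the `r` columns just past the band of row `s`, or the first `r` columns when row `s` is
near the bottom. Every border entry then lies in a recovered row or off the band.
-/

namespace Matrix

variable {R : Type*} [Field R]

theorem det_submatrix_eq_zero_of_rank_le {m n : Type*} [Fintype n] {r : ℕ} {M : Matrix m n R}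
    (hM : M.rank ≤ r) (f : Fin (r + 1) → m) (g : Fin (r + 1) → n) :
    (M.submatrix f g).det = 0 := by
  by_contra h
  have hfull : (M.submatrix f g).rank = r + 1 := by
    simpa using rank_of_isUnit _ ((isUnit_iff_isUnit_det _).mpr (isUnit_iff_ne_zero.mpr h))
  have := (rank_submatrix_le M f g).trans hM
  omega

theorem det_sub_det_of_eq_off_zero_zero {n : ℕ} {A B : Matrix (Fin (n + 1)) (Fin (n + 1)) R}
    (hAB : ∀ p q, p ≠ 0 ∨ q ≠ 0 → A p q = B p q) :
    A.det - B.det = (A 0 0 - B 0 0) * (A.submatrix Fin.succ Fin.succ).det := by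
  have hrows : ∀ q : Fin n → Fin (n + 1), A.submatrix Fin.succ q = B.submatrix Fin.succ q :=
    fun q => by ext p j; exact hAB _ _ (.inl (Fin.succ_ne_zero p))
  rw [det_succ_row_zero A, det_succ_row_zero B, ← Finset.sum_sub_distrib, Fin.sum_univ_succ,
    Finset.sum_eq_zero fun j _ => by rw [hAB 0 j.succ (.inr (Fin.succ_ne_zero j)), hrows, sub_self]]
  simp [hrows, Fin.succAbove_zero, sub_mul]

theorem apply_zero_zero_eq_of_det_eq_zero {n : ℕ} {A B : Matrix (Fin (n + 1)) (Fin (n + 1)) R}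
    (hA : A.det = 0) (hB : B.det = 0) (hAB : ∀ p q, p ≠ 0 ∨ q ≠ 0 → A p q = B p q)
    (hminor : (A.submatrix Fin.succ Fin.succ).det ≠ 0) : A 0 0 = B 0 0 := by
  have := det_sub_det_of_eq_off_zero_zero hAB
  rw [hA, hB, sub_self, eq_comm, mul_eq_zero, sub_eq_zero] at this
  exact this.resolve_right hminor

theorem apply_eq_of_bordered_minor_ne_zero {m n : Type*} [Fintype n] {r : ℕ}
    {M N : Matrix m n R} (hM : M.rank ≤ r) (hN : N.rank ≤ r) {f : Fin r → m} {g : Fin r → n}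
    (hfg : (M.submatrix f g).det ≠ 0) {s : m} {t : n}
    (hrow : ∀ l, N s (g l) = M s (g l)) (hcol : ∀ k, N (f k) t = M (f k) t)
    (hcore : ∀ k l, N (f k) (g l) = M (f k) (g l)) : N s t = M s t := by
  have hcore' : N.submatrix f g = M.submatrix f g := by ext k l; exact hcore k l
  have key := apply_zero_zero_eq_of_det_eq_zero (A := N.submatrix (Fin.cons s f) (Fin.cons t g))
    (B := M.submatrix (Fin.cons s f) (Fin.cons t g)) (det_submatrix_eq_zero_of_rank_le hN _ _)
    (det_submatrix_eq_zero_of_rank_le hM _ _) ?_ ?_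
  · simpa using key
  · intro p q hpq
    cases p using Fin.cases <;> cases q using Fin.cases <;> simp_all
  · simpa [submatrix_submatrix, hcore'] using hfg

end Matrix

theorem row_eq_of_lower_rows_eq {R : Type*} [Field R] {K r m : ℕ}
    {L L' : Matrix (Fin K) (Fin K) R} (hK : 2 * r + 2 * m < K)
    (hL : L.rank ≤ r) (hL' : L'.rank ≤ r)
    (hminor : ∀ ρ γ : Fin r → Fin K, Function.Injective ρ → Function.Injective γ →
      (L.submatrix ρ γ).det ≠ 0)
    (hfar : ∀ i j : Fin K, (i : ℕ) + m < j ∨ (j : ℕ) + m < i → L' i j = L i j)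
    (s : Fin K) (hlower : ∀ i < s, L' i = L i) (t : Fin K) : L' s t = L s t := by
  by_cases hst : (s : ℕ) + m < t ∨ (t : ℕ) + m < s
  · exact hfar s t hst
  let ρ : Fin r → Fin K := fun k =>
    ⟨if (k : ℕ) < s then k else k + 2 * m + r + 1, by split_ifs <;> omega⟩
  let γ : Fin r → Fin K := fun l =>
    ⟨if (s : ℕ) + m + r < K then s + m + 1 + l else l, by split_ifs <;> omega⟩
  have hρ : Function.Injective ρ := fun k l h => by
    simp only [ρ, Fin.ext_iff] at h; split_ifs at h <;> omega
  have hγ : Function.Injective γ := fun k l h => by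
    simp only [γ, Fin.ext_iff] at h; split_ifs at h <;> omega
  refine Matrix.apply_eq_of_bordered_minor_ne_zero hL hL' (hminor ρ γ hρ hγ) ?_ ?_ ?_
  · exact fun l => hfar _ _ (by simp only [γ]; split_ifs <;> omega)
  · intro k
    by_cases hk : (k : ℕ) < s
    · exact congrFun (hlower _ (by simp [ρ, hk, Fin.lt_def])) t
    · exact hfar _ _ (by simp only [ρ, if_neg hk]; omega)
  · intro k l
    by_cases hk : (k : ℕ) < s
    · exact congrFun (hlower _ (by simp [ρ, hk, Fin.lt_def])) _
    · exact hfar _ _ (by simp only [ρ, γ, if_neg hk]; split_ifs <;> omega)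

theorem unique_low_rank_completion_general
    (K r m : ℕ) (hK : 2 * r + 2 + 2 * m ≤ K)
    (L : Matrix (Fin K) (Fin K) ℝ) (hrank : L.rank = r)
    (hminor : ∀ ρ γ : Fin r → Fin K, Function.Injective ρ → Function.Injective γ →
      (L.submatrix ρ γ).det ≠ 0) :
    ∀ L' : Matrix (Fin K) (Fin K) ℝ, L'.rank ≤ r →
      (∀ i j : Fin K, (m : ℤ) < |(i : ℤ) - (j : ℤ)| → L' i j = L i j) → L' = L := by
  intro L' hL' hΩ
  have hfar : ∀ i j : Fin K, (i : ℕ) + m < j ∨ (j : ℕ) + m < i → L' i j = L i j :=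
    fun i j h => hΩ i j (by rw [lt_abs]; omega)
  funext s
  induction s using WellFoundedLT.induction with
  | _ s ih => exact funext (row_eq_of_lower_rows_eq (by omega) hrank.le hL' hminor hfar s ih)

/-- Exact low-rank matrix completion: a symmetric `K × K` matrix `L` of rank `r` all of whose
`r × r` minors are nonzero is the unique matrix of rank at most `r` agreeing with `L` on the
off-band index set `Ω = {(i,j) : |i−j| > m}`, provided `K ≥ 2r + 2 + 2m`. -/
theorem unique_low_rank_completion
    (K r m : ℕ) (hK : 2 * r + 2 + 2 * m ≤ K)
    (L : Matrix (Fin K) (Fin K) ℝ) (hsym : L.IsSymm) (hrank : L.rank = r)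
    (hminor : ∀ ρ γ : Fin r → Fin K, Function.Injective ρ → Function.Injective γ →
      (L.submatrix ρ γ).det ≠ 0) :
    ∀ L' : Matrix (Fin K) (Fin K) ℝ, L'.rank ≤ r →
      (∀ i j : Fin K, (m : ℤ) < |(i : ℤ) - (j : ℤ)| → L' i j = L i j) → L' = L :=
  unique_low_rank_completion_general K r m hK L hrank hminor
end

section
/- Let φ : [0,1] → ℝ be the bump function φ(x) = exp(−1/(1−(x/δ)²)) for 0 ≤ x < δ and φ(x) = 0 otherwise, and let ψ(x) = x. Set ℓ₁(x,y) = ψ(x)ψ(y), ℓ₂(x,y) = ψ(x)ψ(y) + φ(x)φ(y), b₁(x,y) = φ(x)φ(y), b₂ = 0. Then ℓ₁ + b₁ = ℓ₂ + b₂, b₁ is supported in [0,δ]² (hence δ-banded), ℓ₁ has rank 1 and ℓ₂ has rank 2 as integral kernels, and b₁ is a valid (nonnegative-definite, rank-one) covariance kernel; thus finite-rank smoothness alone without analyticity does not guarantee uniqueness of the decomposition. -/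
/-!
Through `c ↦ ∑ cᵢ gᵢ`, the span of the sections of the kernel `∑ gᵢ(x) gᵢ(y)` is the image of the
span of the evaluation vectors `(gᵢ(x))ᵢ`, `x ∈ [0,1]`. If the `gᵢ` are linearly independent on
`[0,1]`, these vectors span everything (a functional vanishing on all of them is a vanishing linear
combination of the `gᵢ`), so the rank is the number of terms. On `[0,1]`, `ψ` and `φ` are
independent because `ψ(0) = 0 ≠ φ(0)`, and `φ ⊗ φ` is nonnegative definite because
`∫∫ φ(x) f(x) φ(y) f(y) = (∫ φ f)²`.
-/

open Set MeasureTheory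

/-- The rank of a kernel `k` on `[0,1]²`: the dimension of the span of its sections
`y ↦ k(x,y)`, `x ∈ [0,1]`. -/
noncomputable def kernelRank (k : ℝ × ℝ → ℝ) : ℕ :=
  Module.finrank ℝ (Submodule.span ℝ ((fun x : ℝ => fun y : ℝ => k (x, y)) '' Icc (0:ℝ) 1))

theorem span_image_eval_eq_top {K α ι : Type*} [Field K] [Fintype ι] {s : Set α}
    {g : ι → α → K} (hg : LinearIndependent K fun i => s.domRestrict (g i)) :
    Submodule.span K ((fun x i => g i x) '' s) = ⊤ := by
  classical
  by_contra hne
  obtain ⟨f, hf0, hle⟩ := Submodule.exists_le_ker_of_lt_top _ (lt_top_iff_ne_top.2 hne)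
  set c : ι → K := fun i => f fun j => if i = j then 1 else 0
  have hvanish : ∑ i, c i • s.domRestrict (g i) = 0 := by
    ext ⟨x, hx⟩
    have hfx : f (fun i => g i x) = 0 := hle (Submodule.subset_span ⟨x, hx, rfl⟩)
    rw [LinearMap.pi_apply_eq_sum_univ] at hfx
    simpa [Finset.sum_apply, mul_comm] using hfx
  have hc := Fintype.linearIndependent_iff.1 hg c hvanish
  exact hf0 (LinearMap.ext fun v => by simp [LinearMap.pi_apply_eq_sum_univ f v, c, hc])

theorem kernelRank_sum_mul_self {ι : Type*} [Fintype ι] {g : ι → ℝ → ℝ}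
    (hg : LinearIndependent ℝ fun i => (Icc (0:ℝ) 1).domRestrict (g i)) :
    kernelRank (fun p => ∑ i, g i p.1 * g i p.2) = Fintype.card ι := by
  classical
  have hsec :
      (fun x y => ∑ i, g i x * g i y) = Fintype.linearCombination ℝ g ∘ fun x i => g i x := by
    ext x y; simp [Fintype.linearCombination_apply, Finset.sum_apply]
  have hinj : Function.Injective (Fintype.linearCombination ℝ g) :=
    linearIndependent_iff_injective_fintypeLinearCombination.1
      (hg.of_comp (LinearMap.funLeft ℝ ℝ Subtype.val))
  rw [kernelRank, hsec, Set.image_comp, Submodule.span_image, span_image_eval_eq_top hg,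
    Submodule.map_top, LinearMap.finrank_range_of_inj hinj, Module.finrank_fintype_fun_eq_card]

theorem kernelRank_mul_self {g : ℝ → ℝ} (hg : (Icc (0:ℝ) 1).domRestrict g ≠ 0) :
    kernelRank (fun p => g p.1 * g p.2) = 1 := by
  simpa using kernelRank_sum_mul_self (g := ![g]) (linearIndependent_unique_iff.2 hg)

theorem kernelRank_add_mul_self {g h : ℝ → ℝ}
    (hgh : LinearIndependent ℝ ![(Icc (0:ℝ) 1).domRestrict g, (Icc (0:ℝ) 1).domRestrict h]) :
    kernelRank (fun p => g p.1 * g p.2 + h p.1 * h p.2) = 2 := by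
  have hgh' : LinearIndependent ℝ fun i => (Icc (0:ℝ) 1).domRestrict (![g, h] i) := by
    convert hgh using 1; ext i; fin_cases i <;> rfl
  simpa using kernelRank_sum_mul_self hgh'

theorem LinearIndependent.pair_of_apply_eq_zero {K α : Type*} [Field K] {f g : α → K} {a : α}
    (hf : f ≠ 0) (hfa : f a = 0) (hga : g a ≠ 0) : LinearIndependent K ![f, g] :=
  (LinearIndependent.pair_iff' hf).2 fun c hc => hga (by simp [← hc, hfa])

theorem mul_eq_zero_of_notMem_prod {α M : Type*} [MulZeroClass M] {g : α → M} {s : Set α}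
    (hg : ∀ x ∉ s, g x = 0) {p : α × α} (hp : p ∉ s ×ˢ s) : g p.1 * g p.2 = 0 := by
  rw [Set.mem_prod, not_and_or] at hp
  rcases hp with hp | hp <;> simp [hg _ hp]

theorem intervalIntegral_integral_mul_self_nonneg (u : ℝ → ℝ) (a b : ℝ) :
    0 ≤ ∫ x in a..b, ∫ y in a..b, u x * u y := by
  simp_rw [intervalIntegral.integral_const_mul, intervalIntegral.integral_mul_const]
  exact mul_self_nonneg _

theorem counterexample_finite_rank_not_unique_general
    (δ : ℝ) (hδ0 : 0 < δ)
    (φ ψ : ℝ → ℝ)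
    (hφ : ∀ x : ℝ, φ x = if 0 ≤ x ∧ x < δ then Real.exp (-1 / (1 - (x / δ) ^ 2)) else 0)
    (hψ : ∀ x : ℝ, ψ x = x)
    (ℓ₁ ℓ₂ b₁ b₂ : ℝ × ℝ → ℝ)
    (h1 : ∀ p : ℝ × ℝ, ℓ₁ p = ψ p.1 * ψ p.2)
    (h2 : ∀ p : ℝ × ℝ, ℓ₂ p = ψ p.1 * ψ p.2 + φ p.1 * φ p.2)
    (h3 : ∀ p : ℝ × ℝ, b₁ p = φ p.1 * φ p.2)
    (h4 : ∀ p : ℝ × ℝ, b₂ p = 0) :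
    (∀ p : ℝ × ℝ, ℓ₁ p + b₁ p = ℓ₂ p + b₂ p) ∧
    (∀ p : ℝ × ℝ, p ∉ Icc (0:ℝ) δ ×ˢ Icc (0:ℝ) δ → b₁ p = 0) ∧
    kernelRank ℓ₁ = 1 ∧ kernelRank ℓ₂ = 2 ∧ kernelRank b₁ = 1 ∧
    (∀ f : ℝ → ℝ, ContinuousOn f (Icc (0:ℝ) 1) →
      0 ≤ ∫ x in (0:ℝ)..1, ∫ y in (0:ℝ)..1, b₁ (x, y) * f x * f y) ∧
    ℓ₁ ≠ ℓ₂ ∧ b₁ ≠ b₂ := by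
  obtain rfl : ℓ₁ = fun p => ψ p.1 * ψ p.2 := funext h1
  obtain rfl : ℓ₂ = fun p => ψ p.1 * ψ p.2 + φ p.1 * φ p.2 := funext h2
  obtain rfl : b₁ = fun p => φ p.1 * φ p.2 := funext h3
  obtain rfl : b₂ = fun _ => 0 := funext h4
  have hφ0 : φ 0 ≠ 0 := by simp [hφ, hδ0, Real.exp_ne_zero]
  have hφ_supp : ∀ x ∉ Icc 0 δ, φ x = 0 := fun x hx => by
    rw [hφ, if_neg]
    exact fun h => hx ⟨h.1, h.2.le⟩
  have hψ_ne : (Icc (0:ℝ) 1).domRestrict ψ ≠ 0 := fun h => by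
    simpa [hψ] using congrFun h ⟨1, by norm_num⟩
  have hφ_ne : (Icc (0:ℝ) 1).domRestrict φ ≠ 0 := fun h => hφ0 (congrFun h ⟨0, by norm_num⟩)
  have hrank₁ := kernelRank_mul_self hψ_ne
  have hrank₂ := kernelRank_add_mul_self
    (LinearIndependent.pair_of_apply_eq_zero (a := ⟨0, by norm_num⟩) hψ_ne (hψ 0) hφ0)
  refine ⟨fun p => by simp, fun p => mul_eq_zero_of_notMem_prod hφ_supp, hrank₁, hrank₂,
    kernelRank_mul_self hφ_ne, fun f _ => ?_, fun h => ?_, fun h => ?_⟩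
  · convert intervalIntegral_integral_mul_self_nonneg (fun x => φ x * f x) 0 1 using 5
    ring
  · simp [h, hrank₂] at hrank₁
  · simpa [hφ0] using congrFun h (0, 0)

/-- Finite-rank counterexample: with the bump `φ` supported in `[0,δ)` and `ψ(x) = x`,
setting `ℓ₁ = ψ⊗ψ`, `ℓ₂ = ψ⊗ψ + φ⊗φ`, `b₁ = φ⊗φ`, `b₂ = 0`, one has
`ℓ₁ + b₁ = ℓ₂ + b₂`, `b₁` is supported in `[0,δ]²`, `ℓ₁` has rank 1 and `ℓ₂` rank 2 as
integral kernels, and `b₁` is a nonnegative-definite rank-one covariance kernel. -/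
theorem counterexample_finite_rank_not_unique
    (δ : ℝ) (hδ0 : 0 < δ) (hδ1 : δ < 1)
    (φ ψ : ℝ → ℝ)
    (hφ : ∀ x : ℝ, φ x = if 0 ≤ x ∧ x < δ then Real.exp (-1 / (1 - (x / δ) ^ 2)) else 0)
    (hψ : ∀ x : ℝ, ψ x = x)
    (ℓ₁ ℓ₂ b₁ b₂ : ℝ × ℝ → ℝ)
    (h1 : ∀ p : ℝ × ℝ, ℓ₁ p = ψ p.1 * ψ p.2)
    (h2 : ∀ p : ℝ × ℝ, ℓ₂ p = ψ p.1 * ψ p.2 + φ p.1 * φ p.2)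
    (h3 : ∀ p : ℝ × ℝ, b₁ p = φ p.1 * φ p.2)
    (h4 : ∀ p : ℝ × ℝ, b₂ p = 0) :
    (∀ p : ℝ × ℝ, ℓ₁ p + b₁ p = ℓ₂ p + b₂ p) ∧
    (∀ p : ℝ × ℝ, p ∉ Icc (0:ℝ) δ ×ˢ Icc (0:ℝ) δ → b₁ p = 0) ∧
    kernelRank ℓ₁ = 1 ∧ kernelRank ℓ₂ = 2 ∧ kernelRank b₁ = 1 ∧
    (∀ f : ℝ → ℝ, ContinuousOn f (Icc (0:ℝ) 1) →
      0 ≤ ∫ x in (0:ℝ)..1, ∫ y in (0:ℝ)..1, b₁ (x, y) * f x * f y) ∧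
    ℓ₁ ≠ ℓ₂ ∧ b₁ ≠ b₂ :=
  counterexample_finite_rank_not_unique_general δ hδ0 φ ψ hφ hψ ℓ₁ ℓ₂ b₁ b₂ h1 h2 h3 h4
end
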